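/- arXiv:1201.5811 — 2 statements merged into one kernel-verified Lean document; each statement's English description precedes it below -/
import Mathlib

section
/- The least general model over a first-order model M is (M, L), where L is exactly the set of teams of the form ‖φ(x̄, m̄)‖_M = {s : Dom(s) = x̄, M ⊨_s φ(x̄, m̄)} for first-order formulas φ and tuples of element parameters m̄ from M; that is, this L satisfies the general-model closure condition, and L ⊆ G for every general model (M, G). -/
namespace IndepGeneral

/-! ## First-order signatures, terms, formulas (with team and parameter
variables, and constant parameters of type `C`) -/

structure Sig : Type 1 where
  Func : Type
  Rel : Type

structure Str (σ : Sig) (M : Type) : Type where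
  funcI : σ.Func → List M → M
  relI : σ.Rel → List M → Prop

inductive Term (σ : Sig) (C : Type) : Type where
  | varT : ℕ → Term σ C
  | varP : ℕ → Term σ C
  | const : C → Term σ C
  | app : σ.Func → List (Term σ C) → Term σ C

inductive FO (σ : Sig) (C : Type) : Type where
  | eq : Term σ C → Term σ C → FO σ C
  | rel : σ.Rel → List (Term σ C) → FO σ C
  | not : FO σ C → FO σ C
  | and : FO σ C → FO σ C → FO σ C
  | or : FO σ C → FO σ C → FO σ C
  | exT : ℕ → FO σ C → FO σ C
  | allT : ℕ → FO σ C → FO σ C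
  | exP : ℕ → FO σ C → FO σ C
  | allP : ℕ → FO σ C → FO σ C

variable {σ τ : Sig} {C M : Type}

def Term.eval (I : Str σ M) (cv : C → M) (h s : ℕ → M) : Term σ C → M
  | .varT n => s n
  | .varP n => h n
  | .const c => cv c
  | .app f ts => I.funcI f (ts.attach.map (fun t => t.1.eval I cv h s))
decreasing_by
  have := List.sizeOf_lt_of_mem t.2
  simp_wf
  omega

/-- Tarskian satisfaction; `h` assigns parameter variables, `s` team variables. -/
def FO.Sat (I : Str σ M) (cv : C → M) : (ℕ → M) → (ℕ → M) → FO σ C → Prop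
  | h, s, .eq t u => t.eval I cv h s = u.eval I cv h s
  | h, s, .rel R ts => I.relI R (ts.map (Term.eval I cv h s))
  | h, s, .not φ => ¬ FO.Sat I cv h s φ
  | h, s, .and φ ψ => FO.Sat I cv h s φ ∧ FO.Sat I cv h s ψ
  | h, s, .or φ ψ => FO.Sat I cv h s φ ∨ FO.Sat I cv h s ψ
  | h, s, .exT x φ => ∃ m, FO.Sat I cv h (Function.update s x m) φ
  | h, s, .allT x φ => ∀ m, FO.Sat I cv h (Function.update s x m) φ
  | h, s, .exP p φ => ∃ m, FO.Sat I cv (Function.update h p m) s φ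
  | h, s, .allP p φ => ∀ m, FO.Sat I cv (Function.update h p m) s φ

def Term.freeT : Term σ C → Finset ℕ
  | .varT n => {n}
  | .varP _ => ∅
  | .const _ => ∅
  | .app _ ts => ts.attach.foldr (fun t acc => t.1.freeT ∪ acc) ∅
decreasing_by
  have := List.sizeOf_lt_of_mem t.2
  simp_wf
  omega

def Term.freeP : Term σ C → Finset ℕ
  | .varT _ => ∅
  | .varP n => {n}
  | .const _ => ∅
  | .app _ ts => ts.attach.foldr (fun t acc => t.1.freeP ∪ acc) ∅
decreasing_by
  have := List.sizeOf_lt_of_mem t.2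
  simp_wf
  omega

def Term.listFreeT (ts : List (Term σ C)) : Finset ℕ :=
  ts.foldr (fun t acc => t.freeT ∪ acc) ∅

/-- Free team variables of a first-order formula. -/
def FO.freeT : FO σ C → Finset ℕ
  | .eq t u => t.freeT ∪ u.freeT
  | .rel _ ts => Term.listFreeT ts
  | .not φ => φ.freeT
  | .and φ ψ => φ.freeT ∪ ψ.freeT
  | .or φ ψ => φ.freeT ∪ ψ.freeT
  | .exT x φ => φ.freeT.erase x
  | .allT x φ => φ.freeT.erase x
  | .exP _ φ => φ.freeT
  | .allP _ φ => φ.freeT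

/-- Free parameter variables of a first-order formula. -/
def FO.freeP : FO σ C → Finset ℕ
  | .eq t u => t.freeP ∪ u.freeP
  | .rel _ ts => ts.foldr (fun t acc => t.freeP ∪ acc) ∅
  | .not φ => φ.freeP
  | .and φ ψ => φ.freeP ∪ ψ.freeP
  | .or φ ψ => φ.freeP ∪ ψ.freeP
  | .exT _ φ => φ.freeP
  | .allT _ φ => φ.freeP
  | .exP p φ => φ.freeP.erase p
  | .allP p φ => φ.freeP.erase p

/-! ## Teams -/

def agreeOn (V : Finset ℕ) (f g : ℕ → M) : Prop := ∀ x ∈ V, f x = g x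

/-- A team with (finite) domain `dom`: a set of assignments which only
depends on the values taken on `dom`. -/
structure Team (M : Type) : Type where
  dom : Finset ℕ
  rows : Set (ℕ → M)
  mem_congr : ∀ ⦃s s' : ℕ → M⦄, agreeOn dom s s' → s ∈ rows → s' ∈ rows

/-- `Rel(X)`: the relation (set of tuples, listed in increasing variable
order of the domain) corresponding to a team. -/
def Team.relOf (X : Team M) : List M → Prop :=
  fun l => ∃ s ∈ X.rows, l = (X.dom.sort (· ≤ ·)).map s

/-- The team `‖φ‖` defined by a first-order formula, on the domain `V`. -/
def teamOf (I : Str σ M) (cv : C → M) (h : ℕ → M) (φ : FO σ C) (V : Finset ℕ) : Team M where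
  dom := V
  rows := { s | ∀ s', agreeOn V s s' → FO.Sat I cv h s' φ }
  mem_congr := by
    intro s s' hag hs t hat
    exact hs t (fun x hx => (hag x hx).trans (hat x hx))

/-! ## General models -/

/-- Adding `k` fresh relation symbols to a signature. -/
def Sig.addRels (σ : Sig) (k : ℕ) : Sig := ⟨σ.Func, σ.Rel ⊕ Fin k⟩

/-- Expanding a structure by interpreting the fresh relation symbols as the
relations `Rel(Xᵢ)` of given teams. -/
def Str.addRels (I : Str σ M) {k : ℕ} (Xs : Fin k → Team M) : Str (σ.addRels k) M :=
  ⟨I.funcI, Sum.elim I.relI (fun i l => (Xs i).relOf l)⟩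

/-- `(M, G)` is a general model: `G` is closed under first-order
definability with element parameters (constants from `M` and values of the
parameter variables) and relation parameters `Rel(Xᵢ)` for teams `Xᵢ ∈ G`. -/
def IsGenModel (I : Str σ M) (G : Set (Team M)) : Prop :=
  ∀ (k : ℕ) (Xs : Fin k → Team M), (∀ i, Xs i ∈ G) →
    ∀ (φ : FO (σ.addRels k) M) (h : ℕ → M) (V : Finset ℕ),
      φ.freeT ⊆ V → teamOf (I.addRels Xs) id h φ V ∈ G

/-- The least general model over `M`. -/
def Least (I : Str σ M) : Set (Team M) := ⋂₀ { G | IsGenModel I G }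

/-- Teams definable by a first-order formula with element parameters. -/
def LDef (I : Str σ M) : Set (Team M) :=
  { X | ∃ (φ : FO σ M) (h : ℕ → M), φ.freeT ⊆ X.dom ∧ X = teamOf I id h φ X.dom }

/-! ## Independence logic syntax -/

inductive IF (σ : Sig) : Type where
  | lit : Bool → σ.Rel → List (Term σ Empty) → IF σ
  | eqLit : Bool → Term σ Empty → Term σ Empty → IF σ
  | indep : List (Term σ Empty) → List (Term σ Empty) → List (Term σ Empty) → IF σ
  | or : IF σ → IF σ → IF σ
  | and : IF σ → IF σ → IF σ
  | ex : ℕ → IF σ → IF σ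
  | all : ℕ → IF σ → IF σ

def IF.free : IF σ → Finset ℕ
  | .lit _ _ ts => Term.listFreeT ts
  | .eqLit _ t u => t.freeT ∪ u.freeT
  | .indep t1 t2 t3 => Term.listFreeT (t1 ++ t2 ++ t3)
  | .or φ ψ => φ.free ∪ ψ.free
  | .and φ ψ => φ.free ∪ ψ.free
  | .ex x φ => φ.free.erase x
  | .all x φ => φ.free.erase x

/-- Value of an (independence-logic) term under a team assignment. -/
def tval (I : Str σ M) (s : ℕ → M) (t : Term σ Empty) : M :=
  t.eval I Empty.elim s s

def tvals (I : Str σ M) (s : ℕ → M) (ts : List (Term σ Empty)) : List M :=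
  ts.map (tval I s)

def litSat (I : Str σ M) (s : ℕ → M) : Bool → σ.Rel → List (Term σ Empty) → Prop
  | true, R, ts => I.relI R (tvals I s ts)
  | false, R, ts => ¬ I.relI R (tvals I s ts)

/-! ## Team operations -/

/-- Restriction `X|V` of a team to a set of variables. -/
def Team.restrict (X : Team M) (V : Finset ℕ) : Team M where
  dom := X.dom ∩ V
  rows := { s | ∃ s₀ ∈ X.rows, agreeOn (X.dom ∩ V) s s₀ }
  mem_congr := by
    rintro s s' hag ⟨s₀, h₀, ha⟩
    exact ⟨s₀, h₀, fun x hx => ((hag x hx).symm).trans (ha x hx)⟩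

/-- The team `X[M/x]` where `x` takes all values of the model. -/
def Team.allExt (X : Team M) (x : ℕ) : Team M where
  dom := insert x X.dom
  rows := { s | ∃ s₀ ∈ X.rows, ∀ v ∈ X.dom, v ≠ x → s v = s₀ v }
  mem_congr := by
    rintro s s' hag ⟨s₀, h₀, ha⟩
    refine ⟨s₀, h₀, fun v hv hne => ?_⟩
    rw [← hag v (Finset.mem_insert_of_mem hv)]
    exact ha v hv hne

/-- The team `X(x̄ ∈ Y)` of members of `X` whose restriction to the domain
of `Y` belongs to `Y`. -/
def Team.select (X Y : Team M) : Team M where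
  dom := X.dom
  rows := { s | s ∈ X.rows ∧ ∃ s' ∈ Y.rows, ∀ v ∈ X.dom, v ∈ Y.dom → s v = s' v }
  mem_congr := by
    rintro s t hag ⟨hs, s', hs', ha⟩
    refine ⟨X.mem_congr hag hs, s', hs', fun v hv hv' => ?_⟩
    rw [← hag v hv]
    exact ha v hv hv'

/-- `X[x]X'`: `X'` is an `x`-variation of `X`. -/
def Varies (X : Team M) (x : ℕ) (X' : Team M) : Prop :=
  X'.dom = insert x X.dom ∧
    X.restrict (X.dom.erase x) = X'.restrict (X.dom.erase x)

/-- `X = Y ∪ Z` as teams over the same domain. -/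
def SplitOf (X Y Z : Team M) : Prop :=
  Y.dom = X.dom ∧ Z.dom = X.dom ∧ X.rows = Y.rows ∪ Z.rows

/-! ## General team semantics and standard team semantics -/

/-- General team semantics `(M, G) ⊨_X φ`. -/
def GSat (I : Str σ M) (G : Set (Team M)) : IF σ → Team M → Prop
  | .lit b R ts, X => ∀ s ∈ X.rows, litSat I s b R ts
  | .eqLit b t u, X => ∀ s ∈ X.rows,
      (if b then tval I s t = tval I s u else tval I s t ≠ tval I s u)
  | .indep t1 t2 t3, X => ∀ s ∈ X.rows, ∀ s' ∈ X.rows,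
      tvals I s t1 = tvals I s' t1 →
      ∃ s'' ∈ X.rows, tvals I s'' (t1 ++ t2) = tvals I s (t1 ++ t2) ∧
        tvals I s'' (t1 ++ t3) = tvals I s' (t1 ++ t3)
  | .or φ ψ, X => ∃ Y ∈ G, ∃ Z ∈ G, SplitOf X Y Z ∧ GSat I G φ Y ∧ GSat I G ψ Z
  | .and φ ψ, X => GSat I G φ X ∧ GSat I G ψ X
  | .ex x φ, X => ∃ X' ∈ G, Varies X x X' ∧ GSat I G φ X'
  | .all x φ, X => GSat I G φ (X.allExt x)

/-- Standard team semantics `M ⊨_X φ`. -/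
def TSat (I : Str σ M) : IF σ → Team M → Prop
  | .lit b R ts, X => ∀ s ∈ X.rows, litSat I s b R ts
  | .eqLit b t u, X => ∀ s ∈ X.rows,
      (if b then tval I s t = tval I s u else tval I s t ≠ tval I s u)
  | .indep t1 t2 t3, X => ∀ s ∈ X.rows, ∀ s' ∈ X.rows,
      tvals I s t1 = tvals I s' t1 →
      ∃ s'' ∈ X.rows, tvals I s'' (t1 ++ t2) = tvals I s (t1 ++ t2) ∧
        tvals I s'' (t1 ++ t3) = tvals I s' (t1 ++ t3)
  | .or φ ψ, X => ∃ Y Z, SplitOf X Y Z ∧ TSat I φ Y ∧ TSat I ψ Z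
  | .and φ ψ, X => TSat I φ X ∧ TSat I ψ X
  | .ex x φ, X => ∃ X', Varies X x X' ∧ TSat I φ X'
  | .all x φ, X => TSat I φ (X.allExt x)

/-! ## Signature morphisms (signature extensions) -/

structure SigHom (σ τ : Sig) : Type where
  fm : σ.Func → τ.Func
  rm : σ.Rel → τ.Rel

def Term.mapSig (e : SigHom σ τ) : Term σ C → Term τ C
  | .varT n => .varT n
  | .varP n => .varP n
  | .const c => .const c
  | .app f ts => .app (e.fm f) (ts.attach.map fun t => t.1.mapSig e)
decreasing_by
  have := List.sizeOf_lt_of_mem t.2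
  simp_wf
  omega

def FO.mapSig (e : SigHom σ τ) : FO σ C → FO τ C
  | .eq t u => .eq (t.mapSig e) (u.mapSig e)
  | .rel R ts => .rel (e.rm R) (ts.map (Term.mapSig e))
  | .not φ => .not (φ.mapSig e)
  | .and φ ψ => .and (φ.mapSig e) (ψ.mapSig e)
  | .or φ ψ => .or (φ.mapSig e) (ψ.mapSig e)
  | .exT x φ => .exT x (φ.mapSig e)
  | .allT x φ => .allT x (φ.mapSig e)
  | .exP p φ => .exP p (φ.mapSig e)
  | .allP p φ => .allP p (φ.mapSig e)

def IF.mapSig (e : SigHom σ τ) : IF σ → IF τ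
  | .lit b R ts => .lit b (e.rm R) (ts.map (Term.mapSig e))
  | .eqLit b t u => .eqLit b (t.mapSig e) (u.mapSig e)
  | .indep t1 t2 t3 =>
      .indep (t1.map (Term.mapSig e)) (t2.map (Term.mapSig e)) (t3.map (Term.mapSig e))
  | .or φ ψ => .or (φ.mapSig e) (ψ.mapSig e)
  | .and φ ψ => .and (φ.mapSig e) (ψ.mapSig e)
  | .ex x φ => .ex x (φ.mapSig e)
  | .all x φ => .all x (φ.mapSig e)

/-- The `σ`-reduct of a `τ`-structure along `e : SigHom σ τ`. -/
def Str.reduct (e : SigHom σ τ) (I : Str τ M) : Str σ M :=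
  ⟨fun f => I.funcI (e.fm f), fun R => I.relI (e.rm R)⟩

def inlHom (σ : Sig) (k : ℕ) : SigHom σ (σ.addRels k) := ⟨id, Sum.inl⟩

/-! ## Entailment semantics -/

/-- Entailment semantics `M ⊨_{γ(h)} φ`: the independence logic formula `φ`
holds of the team defined by the first-order team definition `γ` under the
parameter assignment `h`. -/
def ES (I : Str σ M) : IF σ → FO σ Empty → (ℕ → M) → Prop
  | .lit b R ts, γ, h => ∀ s, FO.Sat I Empty.elim h s γ → litSat I s b R ts
  | .eqLit b t u, γ, h => ∀ s, FO.Sat I Empty.elim h s γ →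
      (if b then tval I s t = tval I s u else tval I s t ≠ tval I s u)
  | .indep t1 t2 t3, γ, h => ∀ s s', FO.Sat I Empty.elim h s γ →
      FO.Sat I Empty.elim h s' γ → tvals I s t1 = tvals I s' t1 →
      ∃ s'', FO.Sat I Empty.elim h s'' γ ∧
        tvals I s'' (t1 ++ t2) = tvals I s (t1 ++ t2) ∧
        tvals I s'' (t1 ++ t3) = tvals I s' (t1 ++ t3)
  | .or φ ψ, γ, h => ∃ (h' : ℕ → M) (γ₁ γ₂ : FO σ Empty), agreeOn γ.freeP h h' ∧
      ES I φ γ₁ h' ∧ ES I ψ γ₂ h' ∧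
      (∀ s, FO.Sat I Empty.elim h' s γ ↔
        (FO.Sat I Empty.elim h' s γ₁ ∨ FO.Sat I Empty.elim h' s γ₂))
  | .and φ ψ, γ, h => ES I φ γ h ∧ ES I ψ γ h
  | .ex x φ, γ, h => ∃ (h' : ℕ → M) (γ' : FO σ Empty), agreeOn γ.freeP h h' ∧
      ES I φ γ' h' ∧
      (∀ s, (∃ m, FO.Sat I Empty.elim h' (Function.update s x m) γ') ↔
            (∃ m, FO.Sat I Empty.elim h' (Function.update s x m) γ))
  | .all x φ, γ, h => ∃ (h' : ℕ → M) (γ' : FO σ Empty), agreeOn γ.freeP h h' ∧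
      ES I φ γ' h' ∧
      (∀ s, FO.Sat I Empty.elim h' s γ' ↔
            ∃ m, FO.Sat I Empty.elim h' (Function.update s x m) γ)

/-! ## The proof system -/

def FO.impl (a b : FO σ C) : FO σ C := .or a.not b
def FO.iffF (a b : FO σ C) : FO σ C := .and (a.impl b) (b.impl a)
def FO.verum : FO σ C := .allT 0 (.eq (.varT 0) (.varT 0))
def bigAnd (Γ : List (FO σ C)) : FO σ C := Γ.foldr .and FO.verum
def allTs (l : List ℕ) (φ : FO σ C) : FO σ C := l.foldr FO.allT φ
def exTs (l : List ℕ) (φ : FO σ C) : FO σ C := l.foldr FO.exT φ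
/-- Universal closure over all free team variables. -/
def FO.uclose (φ : FO σ C) : FO σ C := allTs (φ.freeT.sort (· ≤ ·)) φ

def Term.renT (f : ℕ → ℕ) : Term σ C → Term σ C
  | .varT n => .varT (f n)
  | .varP n => .varP n
  | .const c => .const c
  | .app g ts => .app g (ts.attach.map fun t => t.1.renT f)
decreasing_by
  have := List.sizeOf_lt_of_mem t.2
  simp_wf
  omega

/-- Renaming of the team variables of a formula (sound for injective
renamings). -/
def FO.renT (f : ℕ → ℕ) : FO σ C → FO σ C
  | .eq t u => .eq (t.renT f) (u.renT f)
  | .rel R ts => .rel R (ts.map (Term.renT f))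
  | .not φ => .not (φ.renT f)
  | .and φ ψ => .and (φ.renT f) (ψ.renT f)
  | .or φ ψ => .or (φ.renT f) (ψ.renT f)
  | .exT x φ => .exT (f x) (φ.renT f)
  | .allT x φ => .allT (f x) (φ.renT f)
  | .exP p φ => .exP p (φ.renT f)
  | .allP p φ => .allP p (φ.renT f)

/-- Conjunction of pointwise equalities of two tuples of terms. -/
def eqL (l1 l2 : List (Term σ C)) : FO σ C := bigAnd (List.zipWith FO.eq l1 l2)

/-- The `j`-th disjoint renaming `v̄ⱼ` of the team variables. -/
def copyF (j : ℕ) : ℕ → ℕ := fun v => 3 * v + j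

def rents (j : ℕ) (ts : List (Term σ C)) : List (Term σ C) :=
  ts.map (Term.renT (copyF j))

def litFO : Bool → σ.Rel → List (Term σ Empty) → FO σ Empty
  | true, R, ts => .rel R ts
  | false, R, ts => .not (.rel R ts)

def eqlitFO : Bool → Term σ Empty → Term σ Empty → FO σ Empty
  | true, t, u => .eq t u
  | false, t, u => .not (.eq t u)

/-- The first-order antecedent of the axiom **PS-ind**. -/
def indAx (γ : FO σ Empty) (t1 t2 t3 : List (Term σ Empty)) : FO σ Empty :=
  let V := (γ.freeT ∪ Term.listFreeT (t1 ++ t2 ++ t3)).sort (· ≤ ·)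
  FO.uclose <| FO.impl
    (FO.and (FO.and (γ.renT (copyF 0)) (γ.renT (copyF 1)))
            (eqL (rents 0 t1) (rents 1 t1)))
    (exTs (V.map (copyF 2))
      (FO.and (γ.renT (copyF 2))
        (FO.and (eqL (rents 2 (t1 ++ t2)) (rents 0 (t1 ++ t2)))
                (eqL (rents 2 (t1 ++ t3)) (rents 1 (t1 ++ t3))))))

/-- First-order (semantic) entailment between finite theories. -/
def FOcons (Γ' Γ : List (FO σ Empty)) : Prop :=
  ∀ (M : Type) (I : Str σ M) (h s : ℕ → M),
    (∀ ψ ∈ Γ', FO.Sat I Empty.elim h s ψ) → ∀ ψ ∈ Γ, FO.Sat I Empty.elim h s ψ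

/-! ## Relation existence theories -/

/-- A relation existence theory: each element `⟨k, θ⟩` stands for the
existential second-order sentence `∃R₁…R_k θ(R̄)`. -/
abbrev Theory (σ : Sig) : Type := Set ((k : ℕ) × FO (σ.addRels k) Empty)

/-- `Θ`-closure of a general model. -/
def ThetaClosed (Θ : Theory σ) (I : Str σ M) (G : Set (Team M)) : Prop :=
  ∀ p ∈ Θ, ∃ Xs : Fin p.1 → Team M, (∀ i, Xs i ∈ G) ∧
    ∀ (h s : ℕ → M), FO.Sat (I.addRels Xs) Empty.elim h s p.2

/-- Instantiating the `k` extra relation symbols by relation symbols of `σ`. -/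
def instRels {k : ℕ} (S : Fin k → σ.Rel) : FO (σ.addRels k) C → FO σ C :=
  FO.mapSig ⟨id, Sum.elim id S⟩

def FO.rels : FO σ C → Set σ.Rel
  | .eq _ _ => ∅
  | .rel R _ => {R}
  | .not φ => φ.rels
  | .and φ ψ => φ.rels ∪ ψ.rels
  | .or φ ψ => φ.rels ∪ ψ.rels
  | .exT _ φ => φ.rels
  | .allT _ φ => φ.rels
  | .exP _ φ => φ.rels
  | .allP _ φ => φ.rels

def IF.rels : IF σ → Set σ.Rel
  | .lit _ R _ => {R}
  | .eqLit _ _ _ => ∅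
  | .indep _ _ _ => ∅
  | .or φ ψ => φ.rels ∪ ψ.rels
  | .and φ ψ => φ.rels ∪ ψ.rels
  | .ex _ φ => φ.rels
  | .all _ φ => φ.rels

def relsList (Γ : List (FO σ C)) : Set σ.Rel := { R | ∃ ψ ∈ Γ, R ∈ ψ.rels }

/-- The proof system (sequent calculus) of the paper, augmented by the rule
**PS-Θ** for a relation existence theory `Θ` (for `Θ = ∅` this is exactly
the basic proof system). -/
inductive DerivT (Θ : Theory σ) : List (FO σ Empty) → FO σ Empty → IF σ → Prop where
  | lit (γ : FO σ Empty) (b : Bool) (R : σ.Rel) (ts : List (Term σ Empty)) :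
      DerivT Θ [(γ.impl (litFO b R ts)).uclose] γ (.lit b R ts)
  | eqlit (γ : FO σ Empty) (b : Bool) (t u : Term σ Empty) :
      DerivT Θ [(γ.impl (eqlitFO b t u)).uclose] γ (.eqLit b t u)
  | ind (γ : FO σ Empty) (t1 t2 t3 : List (Term σ Empty)) :
      DerivT Θ [indAx γ t1 t2 t3] γ (.indep t1 t2 t3)
  | orI {Γ₁ Γ₂ : List (FO σ Empty)} {γ₁ γ₂ : FO σ Empty} {φ₁ φ₂ : IF σ}
      (γ : FO σ Empty) :
      DerivT Θ Γ₁ γ₁ φ₁ → DerivT Θ Γ₂ γ₂ φ₂ →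
      DerivT Θ (Γ₁ ++ Γ₂ ++ [(γ.iffF (γ₁.or γ₂)).uclose]) γ (.or φ₁ φ₂)
  | andI {Γ₁ Γ₂ : List (FO σ Empty)} {γ : FO σ Empty} {φ₁ φ₂ : IF σ} :
      DerivT Θ Γ₁ γ φ₁ → DerivT Θ Γ₂ γ φ₂ → DerivT Θ (Γ₁ ++ Γ₂) γ (.and φ₁ φ₂)
  | exI {Γ : List (FO σ Empty)} {γ' : FO σ Empty} {φ : IF σ} (x : ℕ) (γ : FO σ Empty) :
      DerivT Θ Γ γ' φ →
      DerivT Θ (Γ ++ [((FO.exT x γ').iffF (FO.exT x γ)).uclose]) γ (.ex x φ)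
  | allI {Γ : List (FO σ Empty)} {γ' : FO σ Empty} {φ : IF σ} (x : ℕ) (γ : FO σ Empty) :
      DerivT Θ Γ γ' φ →
      DerivT Θ (Γ ++ [(γ'.iffF (FO.exT x γ)).uclose]) γ (.all x φ)
  | ent {Γ : List (FO σ Empty)} {γ : FO σ Empty} {φ : IF σ} (Γ' : List (FO σ Empty)) :
      DerivT Θ Γ γ φ → FOcons Γ' Γ → DerivT Θ Γ' γ φ
  | depar {Γ : List (FO σ Empty)} {γ : FO σ Empty} {φ : IF σ} (p : ℕ) :
      DerivT Θ Γ γ φ → p ∉ γ.freeP → DerivT Θ [FO.exP p (bigAnd Γ)] γ φ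
  | split {Γ₁ Γ₂ : List (FO σ Empty)} {γ : FO σ Empty} {φ : IF σ} :
      DerivT Θ Γ₁ γ φ → DerivT Θ Γ₂ γ φ →
      DerivT Θ [(bigAnd Γ₁).or (bigAnd Γ₂)] γ φ
  | theta {Γ : List (FO σ Empty)} {γ : FO σ Empty} {φ : IF σ}
      (k : ℕ) (θ : FO (σ.addRels k) Empty)
      (hΘ : (⟨k, θ⟩ : (k : ℕ) × FO (σ.addRels k) Empty) ∈ Θ)
      (S : Fin k → σ.Rel) (hinj : Function.Injective S)
      (hfresh : ∀ i, S i ∉ relsList Γ ∪ γ.rels ∪ φ.rels) :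
      DerivT Θ (instRels S θ :: Γ) γ φ → DerivT Θ Γ γ φ

/-- The basic proof system (no PS-Θ rule is applicable for `Θ = ∅`). -/
abbrev Deriv : List (FO σ Empty) → FO σ Empty → IF σ → Prop :=
  DerivT (∅ : Theory σ)

/-- Validity of a sequent `Γ | γ ⊢ φ`. -/
def SeqValid (Γ : List (FO σ Empty)) (γ : FO σ Empty) (φ : IF σ) : Prop :=
  ∀ (M : Type) (I : Str σ M) (h : ℕ → M),
    (∀ ψ ∈ Γ, ∀ s, FO.Sat I Empty.elim h s ψ) → ES I φ γ h


/-!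
A team defined with relation parameters `Rel(Xᵢ)`, each `Xᵢ` first-order definable, is already
first-order definable: replace every atom `Rᵢ(t̄)` by the defining formula `ψᵢ` of `Xᵢ`,
evaluated at `t̄`. Substituting constants for the element parameters of `ψᵢ` first makes it
immune to the parameter quantifiers of the surrounding formula. Conversely, a definable team is
obtained with no relation parameters at all, so it lies in every general model.
-/

theorem Team.ext {X Y : Team M} (hdom : X.dom = Y.dom) (hrows : X.rows = Y.rows) : X = Y := by
  cases X; cases Y; cases hdom; cases hrows; rfl

theorem agreeOn.mono {V W : Finset ℕ} {f g : ℕ → M} (h : agreeOn W f g) (hVW : V ⊆ W) :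
    agreeOn V f g := fun x hx => h x (hVW hx)

theorem agreeOn.update {V : Finset ℕ} {x : ℕ} {f g : ℕ → M} (h : agreeOn (V.erase x) f g)
    (m : M) : agreeOn V (Function.update f x m) (Function.update g x m) := by
  intro v hv
  by_cases hvx : v = x
  · simp [hvx]
  · simpa [hvx] using h v (Finset.mem_erase.2 ⟨hvx, hv⟩)

@[elab_as_elim]
theorem Term.induction {P : Term σ C → Prop} (varT : ∀ n, P (.varT n))
    (varP : ∀ n, P (.varP n)) (const : ∀ c, P (.const c))
    (app : ∀ f ts, (∀ t ∈ ts, P t) → P (.app f ts)) (t : Term σ C) : P t :=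
  match t with
  | .varT n => varT n
  | .varP n => varP n
  | .const c => const c
  | .app f ts => app f ts fun t _ => Term.induction varT varP const app t

theorem mem_foldr_union {α β : Type*} [DecidableEq β] (g : α → Finset β) (l : List α) (x : β) :
    x ∈ l.foldr (fun a acc => g a ∪ acc) ∅ ↔ ∃ a ∈ l, x ∈ g a := by
  induction l <;> simp [*]

@[simp]
theorem Term.eval_varT (I : Str σ M) (cv : C → M) (h s : ℕ → M) (n : ℕ) :
    (Term.varT n : Term σ C).eval I cv h s = s n := by
  simp [Term.eval]

theorem Term.eval_app (I : Str σ M) (cv : C → M) (h s : ℕ → M) (f : σ.Func)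
    (ts : List (Term σ C)) :
    (Term.app f ts).eval I cv h s = I.funcI f (ts.map (Term.eval I cv h s)) := by
  simp [Term.eval]

theorem Term.mem_freeT_app {x : ℕ} {f : σ.Func} {ts : List (Term σ C)} :
    x ∈ (Term.app f ts).freeT ↔ ∃ t ∈ ts, x ∈ t.freeT := by
  rw [Term.freeT, mem_foldr_union (fun t : {t // t ∈ ts} => t.1.freeT)]
  simp

theorem Term.mem_listFreeT {x : ℕ} {ts : List (Term σ C)} :
    x ∈ Term.listFreeT ts ↔ ∃ t ∈ ts, x ∈ t.freeT :=
  mem_foldr_union _ _ _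

theorem Term.eval_congr (I : Str σ M) (cv : C → M) (h : ℕ → M) {s s' : ℕ → M}
    (t : Term σ C) (hs : agreeOn t.freeT s s') : t.eval I cv h s = t.eval I cv h s' := by
  induction t using Term.induction with
  | varT n => simpa using hs n (by simp [Term.freeT])
  | varP n => simp [Term.eval]
  | const c => simp [Term.eval]
  | app f ts ih =>
    simp only [Term.eval_app]
    exact congrArg _ <| List.map_congr_left fun t ht =>
      ih t ht fun x hx => hs x (Term.mem_freeT_app.2 ⟨t, ht, hx⟩)

theorem Term.map_eval_varT (I : Str σ M) (cv : C → M) (h s : ℕ → M) (l : List ℕ) :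
    (l.map (Term.varT : ℕ → Term σ C)).map (Term.eval I cv h s) = l.map s := by
  simp

theorem FO.sat_congr (I : Str σ M) (cv : C → M) (φ : FO σ C) {h s s' : ℕ → M}
    (hs : agreeOn φ.freeT s s') : FO.Sat I cv h s φ ↔ FO.Sat I cv h s' φ := by
  induction φ generalizing h s s' with
  | eq t u =>
    simp only [FO.Sat, FO.freeT] at hs ⊢
    rw [Term.eval_congr I cv h t (hs.mono Finset.subset_union_left),
      Term.eval_congr I cv h u (hs.mono Finset.subset_union_right)]
  | rel R ts =>
    simp only [FO.Sat]
    rw [List.map_congr_left fun t ht => Term.eval_congr I cv h t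
      fun x hx => hs x (Term.mem_listFreeT.2 ⟨t, ht, hx⟩)]
  | not φ ih => exact not_congr (ih hs)
  | and φ ψ ih₁ ih₂ =>
    exact and_congr (ih₁ (hs.mono Finset.subset_union_left))
      (ih₂ (hs.mono Finset.subset_union_right))
  | or φ ψ ih₁ ih₂ =>
    exact or_congr (ih₁ (hs.mono Finset.subset_union_left))
      (ih₂ (hs.mono Finset.subset_union_right))
  | exT x φ ih => exact exists_congr fun m => ih (hs.update m)
  | allT x φ ih => exact forall_congr' fun m => ih (hs.update m)
  | exP p φ ih => exact exists_congr fun m => ih hs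
  | allP p φ ih => exact forall_congr' fun m => ih hs

def Term.toBase {k : ℕ} : Term (σ.addRels k) C → Term σ C
  | .varT n => .varT n
  | .varP n => .varP n
  | .const c => .const c
  | .app f ts => .app f (ts.attach.map fun t => t.1.toBase)
decreasing_by
  have := List.sizeOf_lt_of_mem t.2
  simp_wf
  omega

theorem Term.toBase_app {k : ℕ} (f : (σ.addRels k).Func) (ts : List (Term (σ.addRels k) C)) :
    (Term.app f ts).toBase = Term.app (σ := σ) f (ts.map Term.toBase) := by
  rw [Term.toBase, List.attach_map_val (l := ts) (f := Term.toBase)]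

theorem Term.eval_toBase (I : Str σ M) {k : ℕ} (Xs : Fin k → Team M) (cv : C → M)
    (h s : ℕ → M) (t : Term (σ.addRels k) C) :
    t.toBase.eval I cv h s = t.eval (I.addRels Xs) cv h s := by
  induction t using Term.induction with
  | app f ts ih =>
    rw [Term.toBase_app, Term.eval_app I cv h s f, Term.eval_app, List.map_map]
    exact congrArg _ (List.map_congr_left ih)
  | _ => simp [Term.toBase, Term.eval]

theorem Term.mapSig_app (e : SigHom σ τ) (f : σ.Func) (ts : List (Term σ C)) :
    (Term.app f ts).mapSig e = Term.app (e.fm f) (ts.map (Term.mapSig e)) := by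
  rw [Term.mapSig, List.attach_map_val (l := ts) (f := Term.mapSig e)]

theorem Term.eval_mapSig (e : SigHom σ τ) (J : Str τ M) (cv : C → M) (h s : ℕ → M)
    (t : Term σ C) : (t.mapSig e).eval J cv h s = t.eval (J.reduct e) cv h s := by
  induction t using Term.induction with
  | app f ts ih =>
    simp only [Term.mapSig_app, Term.eval_app, List.map_map]
    exact congrArg _ (List.map_congr_left ih)
  | _ => simp [Term.mapSig, Term.eval]

theorem Term.freeT_mapSig (e : SigHom σ τ) (t : Term σ C) : (t.mapSig e).freeT = t.freeT := by
  induction t using Term.induction with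
  | app f ts ih =>
    ext x
    simp only [Term.mapSig_app, Term.mem_freeT_app, List.mem_map, exists_exists_and_eq_and]
    exact exists_congr fun t => and_congr_right fun ht => by rw [ih t ht]
  | _ => simp [Term.mapSig, Term.freeT]

theorem FO.sat_mapSig (e : SigHom σ τ) (J : Str τ M) (cv : C → M) (φ : FO σ C)
    (h s : ℕ → M) : FO.Sat J cv h s (φ.mapSig e) ↔ FO.Sat (J.reduct e) cv h s φ := by
  induction φ generalizing h s <;>
    simp [FO.mapSig, FO.Sat, Term.eval_mapSig, Function.comp_def, Str.reduct, *]

theorem FO.freeT_mapSig (e : SigHom σ τ) (φ : FO σ C) : (φ.mapSig e).freeT = φ.freeT := by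
  induction φ with
  | rel R ts =>
    ext x
    simp [FO.mapSig, FO.freeT, Term.mem_listFreeT, Term.freeT_mapSig]
  | _ => simp [FO.mapSig, FO.freeT, Term.freeT_mapSig, *]

theorem Str.reduct_addRels_inlHom (I : Str σ M) {k : ℕ} (Xs : Fin k → Team M) :
    (I.addRels Xs).reduct (inlHom σ k) = I :=
  rfl

def Term.instP (c : ℕ → Option C) : Term σ C → Term σ C
  | .varT n => .varT n
  | .varP n => (c n).elim (.varP n) .const
  | .const a => .const a
  | .app f ts => .app f (ts.attach.map fun t => t.1.instP c)
decreasing_by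
  have := List.sizeOf_lt_of_mem t.2
  simp_wf
  omega

def FO.instP : (ℕ → Option C) → FO σ C → FO σ C
  | c, .eq t u => .eq (t.instP c) (u.instP c)
  | c, .rel R ts => .rel R (ts.map (Term.instP c))
  | c, .not φ => .not (φ.instP c)
  | c, .and φ ψ => .and (φ.instP c) (ψ.instP c)
  | c, .or φ ψ => .or (φ.instP c) (ψ.instP c)
  | c, .exT x φ => .exT x (φ.instP c)
  | c, .allT x φ => .allT x (φ.instP c)
  | c, .exP p φ => .exP p (φ.instP (Function.update c p none))
  | c, .allP p φ => .allP p (φ.instP (Function.update c p none))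

def overrideP (cv : C → M) (c : ℕ → Option C) (h : ℕ → M) (n : ℕ) : M :=
  (c n).elim (h n) cv

theorem overrideP_update (cv : C → M) (c : ℕ → Option C) (h : ℕ → M) (p : ℕ) (m : M) :
    overrideP cv (Function.update c p none) (Function.update h p m) =
      Function.update (overrideP cv c h) p m := by
  funext n
  by_cases hn : n = p <;> simp [overrideP, hn]

theorem Term.instP_app (c : ℕ → Option C) (f : σ.Func) (ts : List (Term σ C)) :
    (Term.app f ts).instP c = Term.app f (ts.map (Term.instP c)) := by
  rw [Term.instP, List.attach_map_val (l := ts) (f := Term.instP c)]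

theorem Term.eval_instP (I : Str σ M) (cv : C → M) (c : ℕ → Option C) (h s : ℕ → M)
    (t : Term σ C) : (t.instP c).eval I cv h s = t.eval I cv (overrideP cv c h) s := by
  induction t using Term.induction with
  | varP n => cases hc : c n <;> simp [Term.instP, Term.eval, overrideP, hc]
  | app f ts ih =>
    simp only [Term.instP_app, Term.eval_app, List.map_map]
    exact congrArg _ (List.map_congr_left ih)
  | _ => simp [Term.instP, Term.eval]

theorem FO.sat_instP (I : Str σ M) (cv : C → M) (φ : FO σ C) (c : ℕ → Option C)
    (h s : ℕ → M) : FO.Sat I cv h s (φ.instP c) ↔ FO.Sat I cv (overrideP cv c h) s φ := by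
  induction φ generalizing c h s <;>
    simp [FO.instP, FO.Sat, Term.eval_instP, Function.comp_def, overrideP_update, *]

theorem exists_update_iff {P : (ℕ → M) → Prop} (s : ℕ → M) (a : ℕ) (l : List ℕ) :
    (∃ m s', (∀ x ∉ l, s' x = Function.update s a m x) ∧ P s') ↔
      ∃ s', (∀ x ∉ a :: l, s' x = s x) ∧ P s' := by
  constructor
  · rintro ⟨m, s', hs', hP⟩
    refine ⟨s', fun x hx => ?_, hP⟩
    rw [List.mem_cons, not_or] at hx
    rw [hs' x hx.2, Function.update_of_ne hx.1]
  · rintro ⟨s', hs', hP⟩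
    refine ⟨s' a, s', fun x hx => ?_, hP⟩
    by_cases hxa : x = a
    · simp [hxa]
    · rw [Function.update_of_ne hxa, hs' x (by simp [hxa, hx])]

theorem sat_exTs (I : Str σ M) (cv : C → M) (h : ℕ → M) (φ : FO σ C) (l : List ℕ)
    (s : ℕ → M) :
    FO.Sat I cv h s (exTs l φ) ↔ ∃ s', (∀ x ∉ l, s' x = s x) ∧ FO.Sat I cv h s' φ := by
  induction l generalizing s with
  | nil =>
    exact ⟨fun hs => ⟨s, fun _ _ => rfl, hs⟩, fun ⟨s', hs', hφ⟩ => funext (hs' · (by simp)) ▸ hφ⟩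
  | cons a l ih =>
    simp only [exTs, List.foldr_cons, FO.Sat] at ih ⊢
    simp only [ih, exists_update_iff]

theorem sat_allTs (I : Str σ M) (cv : C → M) (h : ℕ → M) (φ : FO σ C) (l : List ℕ)
    (s : ℕ → M) :
    FO.Sat I cv h s (allTs l φ) ↔ ∀ s', (∀ x ∉ l, s' x = s x) → FO.Sat I cv h s' φ := by
  induction l generalizing s with
  | nil =>
    exact ⟨fun hs s' hs' => funext (hs' · (by simp)) ▸ hs, fun hs => hs s fun _ _ => rfl⟩
  | cons a l ih =>
    simp only [allTs, List.foldr_cons, FO.Sat] at ih ⊢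
    simpa only [ih, not_exists, not_and, not_not] using
      not_congr (exists_update_iff (P := fun s' => ¬ FO.Sat I cv h s' φ) s a l)

theorem mem_freeT_allTs {x : ℕ} (φ : FO σ C) (l : List ℕ) :
    x ∈ (allTs l φ).freeT ↔ x ∈ φ.freeT ∧ x ∉ l := by
  induction l with
  | nil => simp [allTs]
  | cons a l ih =>
    simp only [allTs, List.foldr_cons, FO.freeT] at ih ⊢
    rw [Finset.mem_erase, ih, List.mem_cons]
    tauto

theorem sat_verum (I : Str σ M) (cv : C → M) (h s : ℕ → M) : FO.Sat I cv h s FO.verum := by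
  simp [FO.verum, FO.Sat]

theorem sat_eqL (I : Str σ M) (cv : C → M) (h s : ℕ → M) {l₁ l₂ : List (Term σ C)}
    (hlen : l₁.length = l₂.length) :
    FO.Sat I cv h s (eqL l₁ l₂) ↔
      l₁.map (Term.eval I cv h s) = l₂.map (Term.eval I cv h s) := by
  induction l₁ generalizing l₂ with
  | nil =>
    obtain rfl : l₂ = [] := List.eq_nil_of_length_eq_zero hlen.symm
    simpa [eqL, bigAnd] using sat_verum I cv h s
  | cons a l₁ ih =>
    obtain _ | ⟨b, l₂⟩ := l₂
    · simp at hlen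
    · simp only [eqL, List.zipWith_cons_cons, bigAnd, List.foldr_cons, List.map_cons,
        List.cons.injEq] at ih ⊢
      exact and_congr Iff.rfl (ih (by simpa using hlen))

def FO.exEq (vs : List ℕ) (us : List (Term σ C)) (φ : FO σ C) : FO σ C :=
  exTs vs (.and (eqL (vs.map .varT) us) φ)

theorem sat_exEq (I : Str σ M) (cv : C → M) (h s : ℕ → M) {vs : List ℕ}
    {us : List (Term σ C)} (hlen : vs.length = us.length) (φ : FO σ C) :
    FO.Sat I cv h s (FO.exEq vs us φ) ↔ ∃ s', (∀ x ∉ vs, s' x = s x) ∧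
      vs.map s' = us.map (Term.eval I cv h s') ∧ FO.Sat I cv h s' φ := by
  simp only [FO.exEq, sat_exTs, FO.Sat, sat_eqL I cv h _ (by simpa using hlen : (vs.map
    (Term.varT : ℕ → Term σ C)).length = us.length), Term.map_eval_varT]

theorem exists_agree_map_eq {l : List ℕ} (hl : l.Nodup) {vals : List M}
    (hlen : l.length = vals.length) (s : ℕ → M) :
    ∃ s', (∀ x ∉ l, s' x = s x) ∧ l.map s' = vals := by
  induction l generalizing vals with
  | nil => exact ⟨s, fun _ _ => rfl, (List.eq_nil_of_length_eq_zero hlen.symm).symm⟩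
  | cons a l ih =>
    obtain _ | ⟨m, vals⟩ := vals
    · simp at hlen
    obtain ⟨ha, hl⟩ := List.nodup_cons.1 hl
    obtain ⟨s', hs', hmap⟩ := ih hl (by simpa using hlen)
    refine ⟨Function.update s' a m, fun x hx => ?_, ?_⟩
    · rw [List.mem_cons, not_or] at hx
      rw [Function.update_of_ne hx.1, hs' x hx.2]
    · rw [List.map_cons, Function.update_self, ← hmap,
        List.map_congr_left fun x hx => Function.update_of_ne (ne_of_mem_of_not_mem hx ha) m s']

theorem teamOf_congr {I : Str σ M} {J : Str τ M} {cv : C → M} {h : ℕ → M} {φ : FO σ C}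
    {ψ : FO τ C} {V : Finset ℕ} (hφψ : ∀ s, FO.Sat I cv h s φ ↔ FO.Sat J cv h s ψ) :
    teamOf I cv h φ V = teamOf J cv h ψ V :=
  Team.ext rfl <| Set.ext fun _ => forall₂_congr fun s' _ => hφψ s'

theorem mem_teamOf_iff (I : Str σ M) (cv : C → M) (h : ℕ → M) {φ : FO σ C} {V : Finset ℕ}
    (hφ : φ.freeT ⊆ V) (s : ℕ → M) :
    s ∈ (teamOf I cv h φ V).rows ↔ FO.Sat I cv h s φ :=
  ⟨fun hs => hs s fun _ _ => rfl, fun hs _ hss' => (FO.sat_congr I cv φ (hss'.mono hφ)).1 hs⟩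

theorem teamOf_allTs (I : Str σ M) (cv : C → M) (h : ℕ → M) (φ : FO σ C) {V : Finset ℕ}
    {l : List ℕ} (hl : ∀ x ∈ l, x ∉ V) :
    teamOf I cv h (allTs l φ) V = teamOf I cv h φ V := by
  refine Team.ext rfl (Set.ext fun s => ?_)
  simp only [teamOf, Set.mem_ofPred_eq, sat_allTs]
  refine ⟨fun hs s' hss' => hs s' hss' s' fun _ _ => rfl, fun hs s' hss' s'' hs'' => hs s'' ?_⟩
  intro x hx
  rw [hs'' x fun hxl => hl x hxl hx, hss' x hx]

theorem teamOf_mem_LDef (I : Str σ M) (h : ℕ → M) (φ : FO σ M) (V : Finset ℕ) :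
    teamOf I id h φ V ∈ LDef I := by
  have hl : ∀ x ∈ (φ.freeT \ V).sort (· ≤ ·), x ∉ V := by simp
  refine ⟨allTs ((φ.freeT \ V).sort (· ≤ ·)) φ, h, fun x hx => ?_,
    (teamOf_allTs I id h φ hl).symm⟩
  rw [mem_freeT_allTs, Finset.mem_sort, Finset.mem_sdiff] at hx
  by_contra hxV
  exact hx.2 ⟨hx.1, hxV⟩

theorem exists_def_of_mem_LDef {I : Str σ M} {X : Team M} (hX : X ∈ LDef I) :
    ∃ ψ : FO σ M, ∀ h s, s ∈ X.rows ↔ FO.Sat I id h s ψ := by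
  obtain ⟨φ, h₀, hφ, hX⟩ := hX
  refine ⟨φ.instP (some ∘ h₀), fun h s => ?_⟩
  rw [FO.sat_instP, hX, mem_teamOf_iff I id h₀ hφ]
  rfl

theorem teamOf_mapSig_inlHom (I : Str σ M) {k : ℕ} (Xs : Fin k → Team M) (cv : C → M)
    (h : ℕ → M) (φ : FO σ C) (V : Finset ℕ) :
    teamOf (I.addRels Xs) cv h (φ.mapSig (inlHom σ k)) V = teamOf I cv h φ V :=
  teamOf_congr fun s => by rw [FO.sat_mapSig, Str.reduct_addRels_inlHom]

def freshBase (V : Finset ℕ) (ts : List (Term σ C)) : ℕ :=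
  (Term.listFreeT ts ∪ V).sup id + 1

theorem not_mem_of_freshBase_le {V : Finset ℕ} {ts : List (Term σ C)} {w : ℕ}
    (hw : freshBase V ts ≤ w) : w ∉ Term.listFreeT ts ∪ V := fun hx =>
  absurd (Finset.le_sup (f := id) hx) (by unfold freshBase at hw; simp only [id]; omega)

/-- `ts ∈ Rel(X)` for the team `X` defined by `ψ` on `V`, written
`∃ w̄ (w̄ = ts ∧ ∃ v̄ (v̄ = w̄ ∧ ψ))` with `v̄` the sorted `V`. The detour through the fresh
variables `w̄ = v̄ + b` is needed because the terms `ts` may mention variables of `V`. -/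
def relOfFO (ψ : FO σ C) (V : Finset ℕ) (ts : List (Term σ C)) : FO σ C :=
  if ts.length = V.card then
    FO.exEq ((V.sort (· ≤ ·)).map (· + freshBase V ts)) ts <|
      FO.exEq (V.sort (· ≤ ·)) (((V.sort (· ≤ ·)).map (· + freshBase V ts)).map .varT) ψ
  else .not .verum

theorem sat_relOfFO (I : Str σ M) (cv : C → M) {X : Team M} {ψ : FO σ C}
    (hψ : ∀ h s, s ∈ X.rows ↔ FO.Sat I cv h s ψ) (ts : List (Term σ C)) (h s : ℕ → M) :
    FO.Sat I cv h s (relOfFO ψ X.dom ts) ↔ X.relOf (ts.map (Term.eval I cv h s)) := by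
  have hvs : (X.dom.sort (· ≤ ·)).length = X.dom.card := Finset.length_sort _
  unfold relOfFO Team.relOf
  split_ifs with hlen
  swap
  · simp only [FO.Sat, sat_verum, not_true, false_iff]
    rintro ⟨s₀, -, hT⟩
    exact hlen (by simpa [hvs] using congrArg List.length hT)
  set vs := X.dom.sort (· ≤ ·)
  set ws := vs.map (· + freshBase X.dom ts)
  have hws : ∀ w ∈ ws, w ∉ vs ∧ w ∉ Term.listFreeT ts := by
    simp only [ws, vs, List.mem_map, Finset.mem_sort]
    rintro _ ⟨v, -, rfl⟩
    simpa [not_or, and_comm] using not_mem_of_freshBase_le (ts := ts) (Nat.le_add_left _ v)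
  have hts : ∀ s', (∀ x ∉ ws, s' x = s x) →
      ts.map (Term.eval I cv h s') = ts.map (Term.eval I cv h s) :=
    fun s' hs' => List.map_congr_left fun t ht => Term.eval_congr I cv h t fun x hx =>
      hs' x fun hxw => (hws x hxw).2 (Term.mem_listFreeT.2 ⟨t, ht, hx⟩)
  have hws₂ : ∀ s₁ s₂ : ℕ → M, (∀ x ∉ vs, s₂ x = s₁ x) →
      ws.map s₂ = ws.map s₁ :=
    fun s₁ s₂ hs₂ => List.map_congr_left fun w hw => hs₂ w (hws w hw).1
  have hlen₁ : ws.length = ts.length := by simp [ws, hvs, hlen]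
  have hlen₂ : vs.length = (ws.map (Term.varT : ℕ → Term σ C)).length := by simp [ws]
  simp only [sat_exEq I cv h _ hlen₁, sat_exEq I cv h _ hlen₂, Term.map_eval_varT]
  constructor
  · rintro ⟨s₁, hs₁, hw₁, s₂, hs₂, hv₂, hψ₂⟩
    refine ⟨s₂, (hψ h s₂).2 hψ₂, ?_⟩
    rw [hv₂, hws₂ s₁ s₂ hs₂, hw₁, hts s₁ hs₁]
  · rintro ⟨s₀, hs₀, hT⟩
    obtain ⟨s₁, hs₁, hw₁⟩ := exists_agree_map_eq (l := ws)
      ((Finset.sort_nodup _ _).map (add_left_injective _))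
      (vals := ts.map (Term.eval I cv h s)) (by simpa using hlen₁) s
    obtain ⟨s₂, hs₂, hv₂⟩ := exists_agree_map_eq (l := vs) (Finset.sort_nodup _ _)
      (vals := ws.map s₁) (by simp [ws]) s₁
    refine ⟨s₁, hs₁, by rw [hw₁, hts s₁ hs₁], s₂, hs₂,
      by rw [hv₂, hws₂ s₁ s₂ hs₂],
      (hψ h s₂).1 (X.mem_congr (fun x hx => ?_) hs₀)⟩
    have hv₀ : vs.map s₂ = vs.map s₀ := by rw [hv₂, hw₁, hT]
    exact (List.map_inj_left.1 hv₀ x ((Finset.mem_sort _).2 hx)).symm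

def FO.substRels {k : ℕ} (ψ : Fin k → FO σ C) (V : Fin k → Finset ℕ) :
    FO (σ.addRels k) C → FO σ C
  | .eq t u => .eq t.toBase u.toBase
  | .rel (.inl R) ts => .rel R (ts.map Term.toBase)
  | .rel (.inr i) ts => relOfFO (ψ i) (V i) (ts.map Term.toBase)
  | .not φ => .not (φ.substRels ψ V)
  | .and φ χ => .and (φ.substRels ψ V) (χ.substRels ψ V)
  | .or φ χ => .or (φ.substRels ψ V) (χ.substRels ψ V)
  | .exT x φ => .exT x (φ.substRels ψ V)
  | .allT x φ => .allT x (φ.substRels ψ V)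
  | .exP p φ => .exP p (φ.substRels ψ V)
  | .allP p φ => .allP p (φ.substRels ψ V)

theorem FO.sat_substRels (I : Str σ M) (cv : C → M) {k : ℕ} (Xs : Fin k → Team M)
    {ψ : Fin k → FO σ C} (hψ : ∀ i h s, s ∈ (Xs i).rows ↔ FO.Sat I cv h s (ψ i))
    (φ : FO (σ.addRels k) C) (h s : ℕ → M) :
    FO.Sat I cv h s (φ.substRels ψ fun i => (Xs i).dom) ↔ FO.Sat (I.addRels Xs) cv h s φ := by
  induction φ generalizing h s with
  | rel R ts =>
    cases R with
    | inl R =>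
      simp [FO.substRels, FO.Sat, Function.comp_def, Term.eval_toBase I Xs, Str.addRels]
    | inr i =>
      rw [FO.substRels, sat_relOfFO I cv (hψ i)]
      simp [FO.Sat, Function.comp_def, Term.eval_toBase I Xs, Str.addRels]
  | _ => simp [FO.substRels, FO.Sat, Term.eval_toBase I Xs, *]

theorem isGenModel_LDef (I : Str σ M) : IsGenModel I (LDef I) := by
  intro k Xs hXs φ h V _
  choose ψ hψ using fun i => exists_def_of_mem_LDef (hXs i)
  rw [← teamOf_congr (FO.sat_substRels I id Xs hψ φ h)]
  exact teamOf_mem_LDef I h _ V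

theorem LDef_subset_of_isGenModel {I : Str σ M} {G : Set (Team M)} (hG : IsGenModel I G) :
    LDef I ⊆ G := by
  rintro X ⟨φ, h, hφ, hX⟩
  have hXG := hG 0 Fin.elim0 (fun i => i.elim0) (φ.mapSig (inlHom σ 0)) h X.dom
    (by rwa [FO.freeT_mapSig])
  rwa [teamOf_mapSig_inlHom, ← hX] at hXG

/-- The least general model over `M` consists exactly of
the teams definable by first-order formulas with element parameters:
`LDef I` is a general model, it is contained in every general model, and it
equals the intersection `Least I` of all general models. -/
theorem least_general_model_char {σ : Sig} {M : Type} (I : Str σ M) :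
    IsGenModel I (LDef I) ∧ (∀ G : Set (Team M), IsGenModel I G → LDef I ⊆ G) ∧
      Least I = LDef I :=
  ⟨isGenModel_LDef I, fun _ => LDef_subset_of_isGenModel,
    (Set.sInter_subset_of_mem (isGenModel_LDef I)).antisymm
      (Set.subset_sInter fun _ => LDef_subset_of_isGenModel)⟩

end IndepGeneral
end

section
/- For the least general model (M, L) over M, a team X ∈ L, and an independence logic formula φ with Free(φ) ⊆ Dom(X): (M, L) ⊨_X φ if and only if (M, G) ⊨_X φ for every general model (M, G) over M. -/
namespace IndepGeneral

variable {σ τ : Sig} {C M : Type}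

section LeastGeneralModel

variable {σ : Sig} {M : Type} {I : Str σ M}

theorem isGenModel_least (I : Str σ M) : IsGenModel I (Least I) :=
  fun k Xs hXs φ h V hV G hG => hG k Xs (fun i => hXs i G hG) φ h V hV

theorem least_subset_of_isGenModel {G : Set (Team M)} (hG : IsGenModel I G) : Least I ⊆ G :=
  Set.sInter_subset_of_mem hG

theorem GSat.mono {G G' : Set (Team M)} (hGG' : G ⊆ G') {φ : IF σ} :
    ∀ {X : Team M}, GSat I G φ X → GSat I G' φ X := by
  induction φ with
  | lit | eqLit | indep => exact id
  | or φ ψ ihφ ihψ =>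
    rintro X ⟨Y, hY, Z, hZ, hsplit, hφ, hψ⟩
    exact ⟨Y, hGG' hY, Z, hGG' hZ, hsplit, ihφ hφ, ihψ hψ⟩
  | and φ ψ ihφ ihψ => exact fun ⟨hφ, hψ⟩ => ⟨ihφ hφ, ihψ hψ⟩
  | ex x φ ih => exact fun ⟨X', hX', hvar, hφ⟩ => ⟨X', hGG' hX', hvar, ih hφ⟩
  | all x φ ih => exact ih

end LeastGeneralModel

theorem least_sat_iff_all_general {σ : Sig} {M : Type} (I : Str σ M) (X : Team M)
    (φ : IF σ) :
    GSat I (Least I) φ X ↔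
      ∀ G : Set (Team M), IsGenModel I G → GSat I G φ X :=
  ⟨fun h _ hG => h.mono (least_subset_of_isGenModel hG), fun h => h _ (isGenModel_least I)⟩

/-- Satisfaction in the least general model coincides with
satisfaction in all general models. -/
theorem least_sat_iff_all {σ : Sig} {M : Type} (I : Str σ M) (X : Team M)
    (hX : X ∈ Least I) (φ : IF σ) (hfree : φ.free ⊆ X.dom) :
    GSat I (Least I) φ X ↔
      ∀ G : Set (Team M), IsGenModel I G → GSat I G φ X :=
  least_sat_iff_all_general I X φ

end IndepGeneral
end
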